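/- arXiv:2104.03870 — 2 statements merged into one kernel-verified Lean document; each statement's English description precedes it below -/
import Mathlib

section
/- The cocomposition formula is well defined on Surj_R: if the formula defining Δ_v is applied to a degenerate sequence u in S ⊔_v T (extending it R-linearly to the free module on all sequences, with the convention that terms having a degenerate factor are 0), then every term vanishes — in each summand at least one of the two tensor factors is a degenerate sequence. Consequently Δ_v induces a well-defined R-linear map Δ_v : Surj_R(S ⊔_v T) → Surj_R(S) ⊗_R Surj_R(T) on the quotient by degenerate sequences. -/
namespace SurjectionsCooperad

open Finsupp TensorProduct

def Nondeg {S : Type} [Fintype S] [DecidableEq S] (l : List S) : Prop :=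
  (∀ x : S, x ∈ l) ∧ l.Chain' (· ≠ ·)

instance {S : Type} [Fintype S] [DecidableEq S] (l : List S) : Decidable (Nondeg l) := by
  unfold Nondeg List.Chain'; infer_instance

def IsCaesura {S : Type} [DecidableEq S] (l : List S) (β : ℕ) : Prop :=
  ∃ x ∈ l.drop (β + 1), l[β]? = some x

instance {S : Type} [DecidableEq S] (l : List S) (β : ℕ) : Decidable (IsCaesura l β) := by
  unfold IsCaesura; infer_instance

def cBefore {S : Type} [DecidableEq S] (l : List S) (β : ℕ) : ℕ :=
  ((Finset.range β).filter fun γ => IsCaesura l γ).card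

def prevSet {S : Type} [DecidableEq S] (l : List S) (β : ℕ) : Finset ℕ :=
  (Finset.range β).filter fun γ => l[γ]? = l[β]?

def entrySign {S : Type} [DecidableEq S] (l : List S) (β : ℕ) : ℤ :=
  if IsCaesura l β then (-1) ^ cBefore l β
  else if h : (prevSet l β).Nonempty then -((-1) ^ cBefore l ((prevSet l β).max' h)) else 0

variable (R : Type) [CommRing R]

/-- Shortcut instance (definitionally the standard one) to help elaboration of `0`
in tensor products. -/
noncomputable instance instZeroTensor (M N : Type) [AddCommMonoid M] [Module R M]
    [AddCommMonoid N] [Module R N] : Zero (TensorProduct R M N) :=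
  (inferInstance : AddCommMonoid (TensorProduct R M N)).toZero

/-- Nondegenerate sequences in `S` (of arbitrary degree). -/
def NSeq (S : Type) [Fintype S] [DecidableEq S] : Type := {l : List S // Nondeg l}

/-- The total surjections complex: the free `R`-module on all nondegenerate sequences,
graded by `length − card S`. -/
abbrev Surj (S : Type) [Fintype S] [DecidableEq S] : Type := NSeq S →₀ R

noncomputable def term (S : Type) [Fintype S] [DecidableEq S] (l : List S) : Surj R S :=
  if h : Nondeg l then Finsupp.single ⟨l, h⟩ 1 else 0

/-- The differential of the surjections complex. -/
noncomputable def del (S : Type) [Fintype S] [DecidableEq S] : Surj R S →ₗ[R] Surj R S :=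
  Finsupp.lift (Surj R S) R (NSeq S) fun u =>
    ∑ β ∈ Finset.range u.val.length, entrySign u.val β • term R S (u.val.eraseIdx β)

/-- Relabelling along a map of labels. -/
noncomputable def relabel (S : Type) [Fintype S] [DecidableEq S] (σ : S → S) :
    Surj R S →ₗ[R] Surj R S :=
  Finsupp.lift (Surj R S) R (NSeq S) fun u => term R S (u.val.map σ)

/-- Augmentation: sends every degree-0 nondegenerate sequence to `1` and all
higher-degree ones to `0`. -/
noncomputable def aug (S : Type) [Fintype S] [DecidableEq S] : Surj R S →ₗ[R] R :=
  Finsupp.lift R R (NSeq S) fun u => if u.val.length = Fintype.card S then 1 else 0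

/-- The sign operator `x ↦ (−1)^{|x|} x` on the surjections complex. -/
noncomputable def signId (S : Type) [Fintype S] [DecidableEq S] : Surj R S →ₗ[R] Surj R S :=
  Finsupp.lift (Surj R S) R (NSeq S) fun u =>
    ((-1 : ℤ) ^ (u.val.length - Fintype.card S)) • Finsupp.single u 1

/-- The differential of the tensor product: `∂(x ⊗ y) = ∂x ⊗ y + (−1)^{|x|} x ⊗ ∂y`. -/
noncomputable def delTensor (S T : Type) [Fintype S] [DecidableEq S] [Fintype T] [DecidableEq T] :
    Surj R S ⊗[R] Surj R T →ₗ[R] Surj R S ⊗[R] Surj R T :=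
  TensorProduct.map (del R S) LinearMap.id + TensorProduct.map (signId R S) (del R T)

section Glue

variable {S T W : Type}

/-- The subsequence of the entries of `l` lying in `T`. -/
def tPart (j : W → S ⊕ T) (l : List W) : List T :=
  l.filterMap fun w => (j w).getRight?

/-- `wSeq j v l i` replaces the first `i` entries of `l` lying in `T` by `v`,
deletes the remaining entries lying in `T`, and keeps the values of entries in `S`. -/
def wSeq (j : W → S ⊕ T) (v : S) : List W → ℕ → List S
  | [], _ => []
  | w :: rest, i =>
    match j w with
    | Sum.inl s => s :: wSeq j v rest i
    | Sum.inr _ =>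
      match i with
      | 0 => wSeq j v rest 0
      | i' + 1 => v :: wSeq j v rest i'

/-- The number of `T`-entries among the first `β+1` entries of `l`. -/
def tOcc (j : W → S ⊕ T) (l : List W) (β : ℕ) : ℕ :=
  ((l.take (β + 1)).filterMap fun w => (j w).getRight?).length

/-- The sign `±_{||}` of the canonical bijection `Caes(u) ≅ Caes(w_i) ⋆ Caes(u')`
for the cut at the `i`-th `T`-entry: `(−1)` to the number of pairs of caesuras of `u`
which are interchanged, namely pairs `(β,γ)` with `β < γ`, the entry at `β` lying in
`T` with occurrence number `≥ i` (hence going to the second factor) and the entry at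
`γ` lying in `S` (hence going to the first factor). -/
def cutSign [DecidableEq W] (j : W → S ⊕ T) (l : List W) (i : ℕ) : ℤ :=
  (-1) ^ ((Finset.range l.length ×ˢ Finset.range l.length).filter fun p =>
      p.1 < p.2 ∧ IsCaesura l p.1 ∧ IsCaesura l p.2 ∧
      (l[p.1]?.map fun w => (j w).isRight) = some true ∧ i ≤ tOcc j l p.1 ∧
      (l[p.2]?.map fun w => (j w).isLeft) = some true).card

/-- `j : W → S ⊕ T` exhibits `W` as `S ⊔_v T = (S ∖ {v}) ⊔ T`. -/
def GlueData (j : W → S ⊕ T) (v : S) : Prop :=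
  Function.Injective j ∧ (∀ s : S, s ≠ v ↔ ∃ w, j w = Sum.inl s) ∧ ∀ t : T, ∃ w, j w = Sum.inr t

variable [Fintype S] [DecidableEq S] [Fintype T] [DecidableEq T] [Fintype W] [DecidableEq W]

/-- The cocomposition `Δ_v : Surj_R(S ⊔_v T) → Surj_R(S) ⊗_R Surj_R(T)`. -/
noncomputable def cocomp (j : W → S ⊕ T) (v : S) :
    Surj R W →ₗ[R] Surj R S ⊗[R] Surj R T :=
  Finsupp.lift (Surj R S ⊗[R] Surj R T) R (NSeq W) fun u =>
    ∑ i ∈ Finset.range (tPart j u.val).length,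
      cutSign j u.val (i + 1) •
        (term R S (wSeq j v u.val (i + 1)) ⊗ₜ[R] term R T ((tPart j u.val).drop i))

end Glue

/-!
A sequence is degenerate when it misses a value or has two equal adjacent entries.
A missing value of `S ∖ {v}` is missing from every `w_i`, and a missing value of `T` from
every tail `(u_{α(i)}, …, u_{α(k)})`. Two equal adjacent entries in `S ∖ {v}` stay adjacent
in every `w_i`; two equal adjacent entries `t t` in `T` either both survive in the tail (cut at
or before them) or both become `v`, giving an adjacent pair `v v` in `w_i`.
-/

section Nondeg

variable {S : Type} [Fintype S] [DecidableEq S]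

lemma not_nondeg_append_cons_cons (l₁ l₂ : List S) (x : S) :
    ¬ Nondeg (l₁ ++ x :: x :: l₂) :=
  fun h => List.isChain_iff_forall_rel_of_append_cons_cons.mp h.2 rfl rfl

lemma not_nondeg_iff {l : List S} :
    ¬ Nondeg l ↔ (∃ x, x ∉ l) ∨ ∃ l₁ x l₂, l = l₁ ++ x :: x :: l₂ := by
  rw [Nondeg, List.Chain', List.isChain_iff_forall_rel_of_append_cons_cons]
  grind

lemma term_eq_zero_of_not_nondeg {l : List S} (h : ¬ Nondeg l) :
    term R S l = 0 :=
  dif_neg h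

end Nondeg

section Degenerate

variable {S T W : Type}

lemma wSeq_append (j : W → S ⊕ T) (v : S) (l₁ l₂ : List W) (i : ℕ) :
    wSeq j v (l₁ ++ l₂) i = wSeq j v l₁ i ++ wSeq j v l₂ (i - (tPart j l₁).length) := by
  induction l₁ generalizing i with
  | nil => simp [wSeq, tPart]
  | cons w rest ih =>
    rcases hjw : j w with s | t
    · simp [wSeq, hjw, tPart, ih]
    · rcases i with _ | i <;> simp [wSeq, hjw, tPart, ih]

lemma mem_of_mem_wSeq {j : W → S ⊕ T} {v : S} {l : List W} {i : ℕ} {x : S}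
    (hx : x ∈ wSeq j v l i) : x = v ∨ ∃ w ∈ l, j w = Sum.inl x := by
  induction l generalizing i with
  | nil => simp [wSeq] at hx
  | cons w rest ih =>
    rcases hjw : j w with s | t
    · simp only [wSeq, hjw, List.mem_cons] at hx
      rcases hx with rfl | hx
      · exact .inr ⟨w, List.mem_cons_self, hjw⟩
      · grind
    · rcases i with _ | i <;> simp only [wSeq, hjw, List.mem_cons] at hx <;> grind

lemma mem_tPart {j : W → S ⊕ T} {l : List W} {t : T} :
    t ∈ tPart j l ↔ ∃ w ∈ l, j w = Sum.inr t := by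
  simp [tPart]

variable [Fintype S] [DecidableEq S] [Fintype T] [DecidableEq T]

lemma not_nondeg_wSeq_or_drop_tPart_of_not_mem {j : W → S ⊕ T} {v : S} (hj : GlueData j v)
    {u : List W} {w : W} (hw : w ∉ u) (i : ℕ) :
    ¬ Nondeg (wSeq j v u (i + 1)) ∨ ¬ Nondeg ((tPart j u).drop i) := by
  rcases hjw : j w with s | t
  · refine .inl fun h => ?_
    rcases mem_of_mem_wSeq (h.1 s) with rfl | ⟨w', hw', hjw'⟩
    · exact (hj.2.1 _).mpr ⟨w, hjw⟩ rfl
    · exact hw (hj.1 (hjw'.trans hjw.symm) ▸ hw')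
  · refine .inr fun h => ?_
    obtain ⟨w', hw', hjw'⟩ := mem_tPart.mp (List.mem_of_mem_drop (h.1 t))
    exact hw (hj.1 (hjw'.trans hjw.symm) ▸ hw')

lemma not_nondeg_wSeq_or_drop_tPart_of_append_cons_cons (j : W → S ⊕ T) (v : S)
    (l₁ l₂ : List W) (w : W) (i : ℕ) :
    ¬ Nondeg (wSeq j v (l₁ ++ w :: w :: l₂) (i + 1)) ∨
      ¬ Nondeg ((tPart j (l₁ ++ w :: w :: l₂)).drop i) := by
  rw [wSeq_append]
  rcases hjw : j w with s | t
  · exact .inl (by simpa [wSeq, hjw] using not_nondeg_append_cons_cons _ _ s)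
  rcases le_or_gt i (tPart j l₁).length with hi | hi
  · refine .inr ?_
    have htPart : tPart j (l₁ ++ w :: w :: l₂) = tPart j l₁ ++ t :: t :: tPart j l₂ := by
      simp [tPart, hjw]
    rw [htPart, List.drop_append_of_le_length hi]
    exact not_nondeg_append_cons_cons _ _ t
  · obtain ⟨m, hm⟩ : ∃ m, i + 1 - (tPart j l₁).length = m + 2 :=
      ⟨i - (tPart j l₁).length - 1, by omega⟩
    refine .inl ?_
    rw [hm]
    simpa [wSeq, hjw] using not_nondeg_append_cons_cons _ _ v

lemma not_nondeg_wSeq_or_drop_tPart [Fintype W] [DecidableEq W] {j : W → S ⊕ T} {v : S}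
    (hj : GlueData j v) {u : List W} (hu : ¬ Nondeg u) (i : ℕ) :
    ¬ Nondeg (wSeq j v u (i + 1)) ∨ ¬ Nondeg ((tPart j u).drop i) := by
  rcases not_nondeg_iff.mp hu with ⟨w, hw⟩ | ⟨l₁, w, l₂, rfl⟩
  · exact not_nondeg_wSeq_or_drop_tPart_of_not_mem hj hw i
  · exact not_nondeg_wSeq_or_drop_tPart_of_append_cons_cons j v l₁ l₂ w i

end Degenerate

theorem cocomp_formula_vanishes_on_degenerate_general
    (R : Type) [CommRing R] (S T W : Type)
    [Fintype S] [DecidableEq S] [Fintype T] [DecidableEq T]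
    [Fintype W] [DecidableEq W]
    (v : S) (j : W → S ⊕ T) (hj : GlueData j v)
    (u : List W) (hu : ¬ Nondeg u) :
    (∀ i < (tPart j u).length, ¬ Nondeg (wSeq j v u (i + 1)) ∨ ¬ Nondeg ((tPart j u).drop i)) ∧
    (∀ i ∈ Finset.range (tPart j u).length,
      cutSign j u (i + 1) •
        (term R S (wSeq j v u (i + 1)) ⊗ₜ[R] term R T ((tPart j u).drop i)) = 0) := by
  refine ⟨fun i _ => not_nondeg_wSeq_or_drop_tPart hj hu i, fun i _ => ?_⟩
  rcases not_nondeg_wSeq_or_drop_tPart hj hu i with h | h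
  · rw [term_eq_zero_of_not_nondeg R h, zero_tmul, smul_zero]
  · rw [term_eq_zero_of_not_nondeg R h, tmul_zero, smul_zero]

/-- The cocomposition formula is well defined: applied to a
*degenerate* sequence `u` in `S ⊔_v T`, every term of the formula vanishes — in each
summand at least one of the two tensor factors is a degenerate sequence.
Consequently `Δ_v` induces a well-defined `R`-linear map
`Surj_R(S ⊔_v T) → Surj_R(S) ⊗_R Surj_R(T)` on the quotient by degenerate sequences
(namely, the linear map `cocomp` above, defined on the free module on nondegenerate
sequences). -/
theorem cocomp_formula_vanishes_on_degenerate
    (R : Type) [CommRing R] (S T W : Type)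
    [Fintype S] [DecidableEq S] [Nonempty S] [Fintype T] [DecidableEq T] [Nonempty T]
    [Fintype W] [DecidableEq W]
    (v : S) (j : W → S ⊕ T) (hj : GlueData j v)
    (u : List W) (hu : ¬ Nondeg u) :
    (∀ i < (tPart j u).length, ¬ Nondeg (wSeq j v u (i + 1)) ∨ ¬ Nondeg ((tPart j u).drop i)) ∧
    (∀ i ∈ Finset.range (tPart j u).length,
      cutSign j u (i + 1) •
        (term R S (wSeq j v u (i + 1)) ⊗ₜ[R] term R T ((tPart j u).drop i)) = 0) :=
  cocomp_formula_vanishes_on_degenerate_general R S T W v j hj u hu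

end SurjectionsCooperad
end

section
/- Equivariance of the surjections cocomposition: let R be a commutative ring, S, T nonempty finite sets and v ∈ S. For every bijection σ of S fixing v and every bijection τ of T, letting σ ⊔_v τ denote the induced bijection of S ⊔_v T and letting bijections act on Surj_R by relabelling the entries of sequences, one has Δ_v ∘ (σ ⊔_v τ)_* = (σ_* ⊗ τ_*) ∘ Δ_v as maps Surj_R(S ⊔_v T) → Surj_R(S) ⊗_R Surj_R(T). In other words, Δ_v is equivariant with respect to the subgroup Aut(S ∖ {v}) × Aut(T) ⊆ Aut(S ⊔_v T). -/
/-!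
Every ingredient of `Δ_v` — the subsequence of `T`-entries, the sequences `w_i`, the caesuras
and the sign `±_{||}` — depends only on positions and on whether an entry lies in `S` or in `T`.
A relabelling `σ ⊔_v τ` preserves all of this, and since `σ` fixes `v` it also commutes with
inserting `v` into `w_i`; finally, relabelling along a bijection preserves nondegeneracy.
-/

namespace SurjectionsCooperad

open Finsupp TensorProduct

variable (R : Type) [CommRing R]

section Relabel

variable {α β S S' T T' W W' : Type}

theorem isCaesura_map [DecidableEq α] [DecidableEq β] {f : α → β} (hf : Function.Injective f)
    (l : List α) (n : ℕ) : IsCaesura (l.map f) n ↔ IsCaesura l n := by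
  simp [IsCaesura, ← List.map_drop, List.getElem?_map, hf.eq_iff]

variable {j : W → S ⊕ T} {j' : W' → S' ⊕ T'} {σ : S → S'} {τ : T → T'} {ρ : W → W'}

theorem tPart_map (hρ : ∀ x, j' (ρ x) = Sum.map σ τ (j x)) (l : List W) :
    tPart j' (l.map ρ) = (tPart j l).map τ := by
  simp only [tPart, List.filterMap_map, List.map_filterMap]
  congr 1
  funext w
  cases h : j w <;> simp [hρ, h]

theorem tOcc_map (hρ : ∀ x, j' (ρ x) = Sum.map σ τ (j x)) (l : List W) (n : ℕ) :
    tOcc j' (l.map ρ) n = tOcc j l n := by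
  simpa [tOcc, tPart, ← List.map_take] using congrArg List.length (tPart_map hρ (l.take (n + 1)))

theorem wSeq_map {v : S} {v' : S'} (hσ : σ v = v') (hρ : ∀ x, j' (ρ x) = Sum.map σ τ (j x)) :
    ∀ (l : List W) (i : ℕ), wSeq j' v' (l.map ρ) i = (wSeq j v l i).map σ
  | [], _ => rfl
  | w :: rest, i => by
    cases h : j w with
    | inl s => simp [wSeq, hρ w, h, wSeq_map hσ hρ rest i]
    | inr t =>
      cases i with
      | zero => simp [wSeq, hρ w, h, wSeq_map hσ hρ rest 0]
      | succ i => simp [wSeq, hρ w, h, hσ, wSeq_map hσ hρ rest i]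

theorem cutSign_map [DecidableEq W] [DecidableEq W'] (hρinj : Function.Injective ρ)
    (hρ : ∀ x, j' (ρ x) = Sum.map σ τ (j x)) (l : List W) (i : ℕ) :
    cutSign j' (l.map ρ) i = cutSign j l i := by
  have hside : ∀ (side : S' ⊕ T' → Bool) (side₀ : S ⊕ T → Bool),
      (∀ x, side (Sum.map σ τ x) = side₀ x) → ∀ n : ℕ,
      ((l.map ρ)[n]?.map fun w => side (j' w)) = l[n]?.map fun w => side₀ (j w) := by
    intro side side₀ h n
    simp [List.getElem?_map, Option.map_map, Function.comp_def, hρ, h]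
  simp only [cutSign, List.length_map, isCaesura_map hρinj, tOcc_map hρ,
    hside Sum.isRight Sum.isRight (Sum.isRight_map σ τ),
    hside Sum.isLeft Sum.isLeft (Sum.isLeft_map σ τ)]

end Relabel

section Nondeg

variable {S S' : Type} [Fintype S] [DecidableEq S] [Fintype S'] [DecidableEq S']
  {σ : S → S'} {l : List S}

theorem Nondeg.of_map (hσ : Function.Injective σ) (h : Nondeg (l.map σ)) : Nondeg l := by
  refine ⟨fun x => ?_, ?_⟩
  · obtain ⟨y, hy, hyx⟩ := List.mem_map.mp (h.1 (σ x))
    exact hσ hyx ▸ hy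
  · exact (List.isChain_map σ).mp h.2 |>.imp fun _ _ hne heq => hne (congrArg σ heq)

theorem Nondeg.map (hσ : Function.Bijective σ) (h : Nondeg l) : Nondeg (l.map σ) := by
  refine ⟨fun x => ?_, ?_⟩
  · obtain ⟨y, rfl⟩ := hσ.2 x
    exact List.mem_map_of_mem (h.1 y)
  · exact (List.isChain_map σ).mpr (h.2.imp fun _ _ hne heq => hne (hσ.1 heq))

end Nondeg

section Linear

variable {S T W : Type} [Fintype S] [DecidableEq S] [Fintype T] [DecidableEq T]

theorem relabel_single (σ : S → S) (u : NSeq S) (r : R) :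
    relabel R S σ (Finsupp.single u r) = r • term R S (u.val.map σ) := by
  simp [relabel]

theorem relabel_term {σ : S → S} (hσ : Function.Injective σ) (l : List S) :
    relabel R S σ (term R S l) = term R S (l.map σ) := by
  by_cases h : Nondeg l
  · rw [term, dif_pos h]
    exact (relabel_single R σ ⟨l, h⟩ 1).trans (one_smul R _)
  · rw [term, dif_neg h, map_zero, term, dif_neg fun h' => h (h'.of_map hσ)]

variable [DecidableEq W]

noncomputable def cocompSeq (j : W → S ⊕ T) (v : S) (l : List W) : Surj R S ⊗[R] Surj R T :=
  ∑ i ∈ Finset.range (tPart j l).length,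
    cutSign j l (i + 1) • (term R S (wSeq j v l (i + 1)) ⊗ₜ[R] term R T ((tPart j l).drop i))

theorem cocomp_single [Fintype W] (j : W → S ⊕ T) (v : S) (u : NSeq W) (r : R) :
    cocomp R j v (Finsupp.single u r) = r • cocompSeq R j v u.val := by
  simp [cocomp, cocompSeq]

theorem cocomp_term [Fintype W] (j : W → S ⊕ T) (v : S) {l : List W} (h : Nondeg l) :
    cocomp R j v (term R W l) = cocompSeq R j v l := by
  rw [term, dif_pos h]
  exact (cocomp_single R j v ⟨l, h⟩ 1).trans (one_smul R _)

theorem cocompSeq_map {j : W → S ⊕ T} {v : S} {σ : S → S} {τ : T → T} {ρ : W → W}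
    (hσinj : Function.Injective σ) (hσ : σ v = v) (hτ : Function.Injective τ)
    (hρinj : Function.Injective ρ) (hρ : ∀ x, j (ρ x) = Sum.map σ τ (j x)) (l : List W) :
    cocompSeq R j v (l.map ρ)
      = TensorProduct.map (relabel R S σ) (relabel R T τ) (cocompSeq R j v l) := by
  simp only [cocompSeq, tPart_map hρ, List.length_map, map_sum, map_zsmul, TensorProduct.map_tmul,
    cutSign_map hρinj hρ, wSeq_map hσ hρ, ← List.map_drop, relabel_term R hσinj, relabel_term R hτ]

end Linear

theorem cocomp_equivariant_general
    (R : Type) [CommRing R] (S T W : Type)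
    [Fintype S] [DecidableEq S] [Fintype T] [DecidableEq T]
    [Fintype W] [DecidableEq W]
    (v : S) (j : W → S ⊕ T)
    (σ : Equiv.Perm S) (hσ : σ v = v) (τ : Equiv.Perm T) (ρ : Equiv.Perm W)
    (hρ : ∀ x : W, j (ρ x) = Sum.map σ τ (j x)) :
    (cocomp R j v).comp (relabel R W ρ)
      = (TensorProduct.map (relabel R S σ) (relabel R T τ)).comp (cocomp R j v) := by
  refine Finsupp.lhom_ext fun u r => ?_
  have hu : Nondeg (u.val.map ρ) := u.2.map ρ.bijective
  rw [LinearMap.comp_apply, LinearMap.comp_apply, relabel_single, map_smul, cocomp_term R j v hu,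
    cocomp_single, map_smul,
    cocompSeq_map R σ.injective hσ τ.injective ρ.injective hρ]

/-- Equivariance of the cocomposition: for bijections `σ` of `S`
fixing `v` and `τ` of `T`, and `ρ` the induced bijection `σ ⊔_v τ` of `W = S ⊔_v T`
(characterised by `j ∘ ρ = (σ ⊕ τ) ∘ j`), one has
`Δ_v ∘ (σ ⊔_v τ)_* = (σ_* ⊗ τ_*) ∘ Δ_v`, where bijections act on `Surj_R` by
relabelling the entries of sequences.  In other words, `Δ_v` is equivariant with
respect to `Aut(S ∖ {v}) × Aut(T) ⊆ Aut(S ⊔_v T)`. -/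
theorem cocomp_equivariant
    (R : Type) [CommRing R] (S T W : Type)
    [Fintype S] [DecidableEq S] [Nonempty S] [Fintype T] [DecidableEq T] [Nonempty T]
    [Fintype W] [DecidableEq W]
    (v : S) (j : W → S ⊕ T) (hj : GlueData j v)
    (σ : Equiv.Perm S) (hσ : σ v = v) (τ : Equiv.Perm T) (ρ : Equiv.Perm W)
    (hρ : ∀ x : W, j (ρ x) = Sum.map σ τ (j x)) :
    (cocomp R j v).comp (relabel R W ρ)
      = (TensorProduct.map (relabel R S σ) (relabel R T τ)).comp (cocomp R j v) :=
  cocomp_equivariant_general R S T W v j σ hσ τ ρ hρ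
end SurjectionsCooperad
end
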